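/- Let V be a real vector space with a symmetric bilinear form Q, and suppose V = P ⊕ M is a direct sum decomposition into Q-orthogonal subspaces (Q(p,m) = 0 for all p ∈ P, m ∈ M); for x ∈ V write x⁺ for the P-component of x. Assume Q is positive semidefinite on P and negative semidefinite on M. Then for every α ∈ V and every finite family E₁, …, E_k ∈ V, there exist signs ε₁, …, ε_k ∈ {+1, −1} such that the element a = α + Σᵢ εᵢ Eᵢ satisfies Q(a⁺, a⁺) ≥ Q(α, α). -/

import Mathlib

/-!
Pick the signs greedily, one generator at a time: for a partial sum `b` and the next `E`, one of
the two signs makes the cross term `±(Q b⁺ E⁺ + Q E⁺ b⁺)` nonnegative, so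
`Q (b⁺ ± E⁺) (b⁺ ± E⁺) ≥ Q b⁺ b⁺` since `Q E⁺ E⁺ ≥ 0`. Hence `Q a⁺ a⁺ ≥ Q α⁺ α⁺`, and
`Q α⁺ α⁺ ≥ Q α α` because `α = α⁺ + α⁻` with `α⁻ ∈ M` orthogonal to `α⁺` and `Q α⁻ α⁻ ≤ 0`.
-/

lemma Submodule.projection_eq_of_mem_of_sub_mem {R E : Type*} [Ring R] [AddCommGroup E]
    [Module R E] {p q : Submodule R E} (hpq : IsCompl p q) {x y : E} (hy : y ∈ p)
    (hxy : x - y ∈ q) : p.projection q hpq x = y := by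
  rw [← add_sub_cancel y x, map_add, projection_apply_of_mem_left hpq hy,
    projection_apply_of_mem_right hpq hxy, add_zero]

namespace LinearMap.BilinForm

variable {V : Type*} [AddCommGroup V] [Module ℝ V] (Q : LinearMap.BilinForm ℝ V)

lemma exists_sign_le_apply_add_smul {y : V} (hy : 0 ≤ Q y y) (x : V) :
    ∃ s : ℝ, (s = 1 ∨ s = -1) ∧ Q x x ≤ Q (x + s • y) (x + s • y) := by
  have expand : ∀ s : ℝ,
      Q (x + s • y) (x + s • y) = Q x x + s * (Q x y + Q y x) + s * s * Q y y := by
    intro s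
    simp only [map_add, map_smul, LinearMap.add_apply, LinearMap.smul_apply, smul_eq_mul]
    ring
  rcases le_total 0 (Q x y + Q y x) with h | h
  · exact ⟨1, Or.inl rfl, by rw [expand]; nlinarith⟩
  · exact ⟨-1, Or.inr rfl, by rw [expand]; nlinarith⟩

lemma exists_signs_le_apply_add_sum {k : ℕ} (E : Fin k → V) (hE : ∀ i, 0 ≤ Q (E i) (E i))
    (x : V) : ∃ ε : Fin k → ℝ, (∀ i, ε i = 1 ∨ ε i = -1) ∧
      Q x x ≤ Q (x + ∑ i, ε i • E i) (x + ∑ i, ε i • E i) := by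
  induction k with
  | zero => exact ⟨Fin.elim0, fun i => i.elim0, by simp⟩
  | succ k ih =>
    obtain ⟨ε, hε, hle⟩ := ih (E ∘ Fin.castSucc) fun i => hE _
    obtain ⟨s, hs, hle'⟩ := Q.exists_sign_le_apply_add_smul (hE (Fin.last k))
      (x + ∑ i, ε i • E i.castSucc)
    refine ⟨Fin.snoc ε s, Fin.lastCases (by simpa using hs) (by simpa using hε), ?_⟩
    simp only [Fin.sum_univ_castSucc, Fin.snoc_castSucc, Fin.snoc_last, ← add_assoc]
    exact hle.trans hle'

lemma apply_self_le_of_sub_mem (hQ : ∀ x y, Q x y = Q y x) {P M : Submodule ℝ V}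
    (horth : ∀ p ∈ P, ∀ m ∈ M, Q p m = 0) (hM : ∀ m ∈ M, Q m m ≤ 0) {x p : V} (hp : p ∈ P)
    (hxp : x - p ∈ M) : Q x x ≤ Q p p := by
  have hpm : Q p (x - p) = 0 := horth p hp _ hxp
  have hmp : Q (x - p) p = 0 := hQ p (x - p) ▸ hpm
  calc Q x x = Q (p + (x - p)) (p + (x - p)) := by rw [add_sub_cancel]
    _ = Q p p + Q (x - p) (x - p) := by
      simp only [map_add, LinearMap.add_apply, hpm, hmp]
      ring
    _ ≤ Q p p := by linarith [hM _ hxp]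

end LinearMap.BilinForm

/-- If `V = P ⊕ M` with `P` and `M` orthogonal for a symmetric bilinear form `Q` that is
positive semidefinite on `P` and negative semidefinite on `M`, then for every `α ∈ V` and
every finite family `E₁, …, E_k`, one can choose signs `ε i ∈ {1, -1}` so that the
`P`-component `a⁺` of `a = α + ∑ i, ε i • E i` satisfies `Q a⁺ a⁺ ≥ Q α α`. -/
theorem exists_signs_selfdual_part_sq_ge
    {V : Type*} [AddCommGroup V] [Module ℝ V]
    (Q : LinearMap.BilinForm ℝ V) (hQsymm : ∀ x y : V, Q x y = Q y x)
    (P M : Submodule ℝ V) (hcompl : IsCompl P M)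
    (horth : ∀ p ∈ P, ∀ m ∈ M, Q p m = 0)
    (hpsd : ∀ p ∈ P, 0 ≤ Q p p)
    (hnsd : ∀ m ∈ M, Q m m ≤ 0)
    (α : V) (k : ℕ) (E : Fin k → V) :
    ∃ ε : Fin k → ℝ, (∀ i, ε i = 1 ∨ ε i = -1) ∧
      ∀ aplus : V, aplus ∈ P → (α + ∑ i, ε i • E i) - aplus ∈ M →
        Q α α ≤ Q aplus aplus := by
  set π := P.projection M hcompl
  obtain ⟨ε, hε, hle⟩ := (Q.comp π π).exists_signs_le_apply_add_sum E
    (fun i => hpsd _ (P.projection_apply_mem hcompl _)) α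
  refine ⟨ε, hε, fun aplus haP haM => ?_⟩
  rw [← P.projection_eq_of_mem_of_sub_mem hcompl haP haM]
  exact (Q.apply_self_le_of_sub_mem hQsymm horth hnsd (P.projection_apply_mem hcompl α)
    (P.sub_projection_mem hcompl α)).trans hle
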